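/- arXiv:2411.01229 — 5 statements merged into one kernel-verified Lean document; each statement's English description precedes it below -/
import Mathlib

section
/- Let $Q : X \to \mathbb{R}$ be a function on a finite nonempty set $X \subseteq \mathbb{R}^n$, let $\hat{x} \in X$, and let $L \le Q(x)$ for all $x \in X$. Suppose $d > 0$ satisfies $d \le \|x - \hat{x}\|_1$ for every $x \in X$ with $x \ne \hat{x}$, and let $\rho \ge (Q(\hat{x}) - L)/d$. Then for all $x \in X$: $Q(\hat{x}) \le Q(x) + \rho \, \|x - \hat{x}\|_1$. In particular, $\min_{x \in X} \{ Q(x) + \rho \|x - \hat{x}\|_1 \} = Q(\hat{x})$, i.e., $(-\rho \mathbf{1}, -\rho \mathbf{1})$ is an optimal solution of the ReLU Lagrangian dual at $\hat{x}$. -/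
/-- a sufficiently large penalty coefficient gives an optimal ReLU dual solution. -/
theorem relu_dual_closed_form (n : ℕ) (X : Finset (Fin n → ℝ)) (hX : X.Nonempty)
    (Q : (Fin n → ℝ) → ℝ) (xh : Fin n → ℝ) (hxh : xh ∈ X)
    (L : ℝ) (hL : ∀ x ∈ X, L ≤ Q x)
    (d : ℝ) (hd : 0 < d) (hdist : ∀ x ∈ X, x ≠ xh → d ≤ ∑ i, |x i - xh i|)
    (ρ : ℝ) (hρ : (Q xh - L) / d ≤ ρ) :
    (∀ x ∈ X, Q xh ≤ Q x + ρ * ∑ i, |x i - xh i|)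
    ∧ X.inf' hX (fun x => Q x + ρ * ∑ i, |x i - xh i|) = Q xh := by
  have hρ0 : 0 ≤ ρ := le_trans (div_nonneg (sub_nonneg.2 (hL xh hxh)) hd.le) hρ
  have hρd : Q xh - L ≤ ρ * d := by
    rw [div_le_iff₀ hd] at hρ; linarith
  have hmain : ∀ x ∈ X, Q xh ≤ Q x + ρ * ∑ i, |x i - xh i| := by
    intro x hx
    by_cases hxe : x = xh
    · subst hxe; simp
    · have h1 := hdist x hx hxe
      have h2 : ρ * d ≤ ρ * ∑ i, |x i - xh i| := mul_le_mul_of_nonneg_left h1 hρ0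
      have := hL x hx
      linarith
  refine ⟨hmain, le_antisymm ?_ ?_⟩
  · calc X.inf' hX (fun x => Q x + ρ * ∑ i, |x i - xh i|) ≤ Q xh + ρ * ∑ i, |xh i - xh i| := Finset.inf'_le _ hxh
      _ = Q xh := by simp
  · exact Finset.le_inf' hX _ hmain
end

section
/- Let $Q : X \to \mathbb{R}$ be a function on a finite set $X \subseteq \mathbb{Z}^n$ with $\hat{x} \in X$, and let $L \le Q(x)$ for all $x \in X$. Then the $\Lambda$-shaped cut is valid: for every $x \in X$ and every $\theta \ge Q(x)$, one has $\theta \ge Q(\hat{x}) - (Q(\hat{x}) - L)\, \|x - \hat{x}\|_1$. -/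
/-- validity of the Λ-shaped cut for integer first-stage decisions. -/
theorem lambda_shaped_cut_valid (n : ℕ) (X : Finset (Fin n → ℝ))
    (hint : ∀ x ∈ X, ∀ i, ∃ m : ℤ, x i = (m : ℝ))
    (Q : (Fin n → ℝ) → ℝ) (xh : Fin n → ℝ) (hxh : xh ∈ X)
    (L : ℝ) (hL : ∀ x ∈ X, L ≤ Q x) :
    ∀ x ∈ X, ∀ θ : ℝ, Q x ≤ θ →
      Q xh - (Q xh - L) * ∑ i, |x i - xh i| ≤ θ := by
  intro x hx θ hθ
  by_cases hxe : x = xh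
  · subst hxe
    simp
    linarith
  · have hne : ∃ i, x i ≠ xh i := by
      by_contra h
      push_neg at h
      exact hxe (funext h)
    obtain ⟨i, hi⟩ := hne
    have h1 : (1 : ℝ) ≤ |x i - xh i| := by
      obtain ⟨m, hm⟩ := hint x hx i
      obtain ⟨k, hk⟩ := hint xh hxh i
      rw [hm, hk, ← Int.cast_sub, ← Int.cast_abs]
      have hmk : m ≠ k := by
        intro h; apply hi; rw [hm, hk, h]
      have : (1 : ℤ) ≤ |m - k| := Int.one_le_abs (sub_ne_zero.mpr hmk)
      exact_mod_cast this
    have hs : (1 : ℝ) ≤ ∑ j, |x j - xh j| := by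
      calc (1 : ℝ) ≤ |x i - xh i| := h1
        _ ≤ ∑ j, |x j - xh j| :=
          Finset.single_le_sum (f := fun j => |x j - xh j|)
            (fun j _ => abs_nonneg _) (Finset.mem_univ i)
    have hQL : (0 : ℝ) ≤ Q xh - L := by linarith [hL xh hxh]
    nlinarith [hL x hx]
end

section
/- Let $Q : X \to \mathbb{R}$ with $X \subseteq \mathbb{R}^n$ finite, $\hat{x} \in X$, $\pi \in \mathbb{R}^n$, $\rho \ge 0$, and suppose the augmented Lagrangian cut is tight, i.e., $Q(\hat{x}) \le Q(x) + \pi^\top(\hat{x} - x) + \rho\|\hat{x} - x\|_1$ for all $x \in X$. Define $\pi^+_i = \pi_i - \rho$ and $\pi^-_i = -\pi_i - \rho$ for each $i$. Then $(\pi^+, \pi^-)$ satisfies the ReLU Lagrangian dual optimality condition: $Q(\hat{x}) \le Q(x) - \sum_i \pi^+_i \max(x_i - \hat{x}_i, 0) - \sum_i \pi^-_i \max(\hat{x}_i - x_i, 0)$ for all $x \in X$. -/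
/-- tight augmented Lagrangian cuts are ReLU Lagrangian cuts. -/
theorem aug_lagrangian_is_relu (n : ℕ) (X : Finset (Fin n → ℝ))
    (Q : (Fin n → ℝ) → ℝ) (xh : Fin n → ℝ) (hxh : xh ∈ X)
    (pi : Fin n → ℝ) (ρ : ℝ) (hρ : 0 ≤ ρ)
    (htight : ∀ x ∈ X,
      Q xh ≤ Q x + (∑ i, pi i * (xh i - x i)) + ρ * ∑ i, |xh i - x i|) :
    ∀ x ∈ X,
      Q xh ≤ Q x - (∑ i, (pi i - ρ) * max (x i - xh i) 0)
        - ∑ i, (-pi i - ρ) * max (xh i - x i) 0 := by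
  intro x hx
  have h := htight x hx
  have key : ∀ i, pi i * (xh i - x i) + ρ * |xh i - x i|
      = -((pi i - ρ) * max (x i - xh i) 0) - (-pi i - ρ) * max (xh i - x i) 0 := by
    intro i
    rcases le_total (x i) (xh i) with hle | hle
    · rw [abs_of_nonneg (by linarith), max_eq_right (by linarith),
        max_eq_left (by linarith)]
      ring
    · rw [abs_of_nonpos (by linarith), max_eq_left (by linarith),
        max_eq_right (by linarith)]
      ring
  have hsum : (∑ i, pi i * (xh i - x i)) + ρ * ∑ i, |xh i - x i|
      = -(∑ i, (pi i - ρ) * max (x i - xh i) 0)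
        - ∑ i, (-pi i - ρ) * max (xh i - x i) 0 := by
    rw [Finset.mul_sum, ← Finset.sum_add_distrib, ← Finset.sum_neg_distrib,
      ← Finset.sum_sub_distrib]
    exact Finset.sum_congr rfl fun i _ => key i
  linarith
end

section
/- (Strong duality for the ReLU Lagrangian dual on a finite set.) Let $X \subseteq \mathbb{R}^n$ be a nonempty finite set, $Q : X \to \mathbb{R}$, and $\hat{x} \in X$. Then $\sup_{\pi^+, \pi^- \in \mathbb{R}^n} \min_{x \in X}\{Q(x) - \sum_i \pi^+_i (x_i - \hat{x}_i)^+ - \sum_i \pi^-_i (\hat{x}_i - x_i)^+\} = Q(\hat{x})$, and the supremum is attained at $(\pi^+, \pi^-) = (-\rho\mathbf{1}, -\rho\mathbf{1})$ for any $\rho \ge (Q(\hat{x}) - L)/d$, where $L = \min_{x \in X} Q(x)$ and $d = \min\{\|x - \hat{x}\|_1 : x \in X, x \ne \hat{x}\}$ (with the convention that any $\rho \ge 0$ works if $X = \{\hat{x}\}$). -/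
/-- strong duality for the ReLU Lagrangian dual on a finite set, with
attainment at `(-ρ𝟙, -ρ𝟙)` for `ρ ≥ (Q(xh) - L)/d`. -/
theorem relu_strong_duality (n : ℕ) (X : Finset (Fin n → ℝ)) (hX : X.Nonempty)
    (Q : (Fin n → ℝ) → ℝ) (xh : Fin n → ℝ) (hxh : xh ∈ X) :
    (⨆ p : (Fin n → ℝ) × (Fin n → ℝ),
        X.inf' hX (fun x => Q x - (∑ i, p.1 i * max (x i - xh i) 0)
          - ∑ i, p.2 i * max (xh i - x i) 0)) = Q xh
    ∧ ∀ d : ℝ, 0 < d → (∀ x ∈ X, x ≠ xh → d ≤ ∑ i, |x i - xh i|) →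
        ∀ ρ : ℝ, (Q xh - X.inf' hX Q) / d ≤ ρ →
          X.inf' hX (fun x => Q x + ρ * ∑ i, |x i - xh i|) = Q xh := by
  have habs : ∀ a : ℝ, max a 0 + max (-a) 0 = |a| := by
    intro a
    rcases le_total a 0 with h | h
    · rw [max_eq_right h, max_eq_left (neg_nonneg.mpr h), abs_of_nonpos h, zero_add]
    · rw [max_eq_left h, max_eq_right (neg_nonpos.mpr h), abs_of_nonneg h, add_zero]
  have key : ∀ x : Fin n → ℝ,
      (∑ i, max (x i - xh i) 0) + ∑ i, max (xh i - x i) 0 = ∑ i, |x i - xh i| := by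
    intro x
    rw [← Finset.sum_add_distrib]
    exact Finset.sum_congr rfl fun i _ => by simpa [neg_sub] using habs (x i - xh i)
  have hL : X.inf' hX Q ≤ Q xh := Finset.inf'_le _ hxh
  have part2 : ∀ d : ℝ, 0 < d → (∀ x ∈ X, x ≠ xh → d ≤ ∑ i, |x i - xh i|) →
      ∀ ρ : ℝ, (Q xh - X.inf' hX Q) / d ≤ ρ →
        X.inf' hX (fun x => Q x + ρ * ∑ i, |x i - xh i|) = Q xh := by
    intro d hd hdle ρ hρ
    have hρ0 : 0 ≤ ρ := le_trans (div_nonneg (by linarith) hd.le) hρ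
    have hρd : Q xh - X.inf' hX Q ≤ ρ * d := by
      rw [div_le_iff₀ hd] at hρ; linarith
    apply le_antisymm
    · calc X.inf' hX (fun x => Q x + ρ * ∑ i, |x i - xh i|)
          ≤ Q xh + ρ * ∑ i, |xh i - xh i| := Finset.inf'_le _ hxh
        _ = Q xh := by simp
    · rw [Finset.le_inf'_iff]
      intro x hx
      by_cases hxe : x = xh
      · subst hxe; simp
      · have h1 : d ≤ ∑ i, |x i - xh i| := hdle x hx hxe
        have h3 : X.inf' hX Q ≤ Q x := Finset.inf'_le _ hx
        nlinarith [mul_le_mul_of_nonneg_left h1 hρ0]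
  have hub : ∀ p : (Fin n → ℝ) × (Fin n → ℝ),
      X.inf' hX (fun x => Q x - (∑ i, p.1 i * max (x i - xh i) 0)
        - ∑ i, p.2 i * max (xh i - x i) 0) ≤ Q xh := by
    intro p
    calc X.inf' hX _ ≤ Q xh - (∑ i, p.1 i * max (xh i - xh i) 0)
          - ∑ i, p.2 i * max (xh i - xh i) 0 := Finset.inf'_le _ hxh
      _ = Q xh := by simp
  have hbdd : BddAbove (Set.range fun p : (Fin n → ℝ) × (Fin n → ℝ) =>
      X.inf' hX (fun x => Q x - (∑ i, p.1 i * max (x i - xh i) 0)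
        - ∑ i, p.2 i * max (xh i - x i) 0)) := by
    refine ⟨Q xh, ?_⟩
    rintro y ⟨p, rfl⟩
    exact hub p
  refine ⟨le_antisymm (ciSup_le hub) ?_, part2⟩
  -- attainment
  by_cases hsing : ∀ x ∈ X, x = xh
  · refine le_ciSup_of_le hbdd (0, 0) ?_
    rw [Finset.le_inf'_iff]
    intro x hx
    rw [hsing x hx]
    simp
  · push_neg at hsing
    obtain ⟨x0, hx0, hx0ne⟩ := hsing
    have hF : (X.filter (fun x => x ≠ xh)).Nonempty :=
      ⟨x0, Finset.mem_filter.mpr ⟨hx0, hx0ne⟩⟩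
    set d := (X.filter (fun x => x ≠ xh)).inf' hF (fun x => ∑ i, |x i - xh i|) with hdDef
    have hd : 0 < d := by
      rw [hdDef, Finset.lt_inf'_iff]
      intro x hx
      obtain ⟨_, hne⟩ := Finset.mem_filter.mp hx
      obtain ⟨i, hi⟩ := Function.ne_iff.mp hne
      refine Finset.sum_pos' (fun j _ => abs_nonneg _) ⟨i, Finset.mem_univ i, ?_⟩
      exact abs_pos.mpr (sub_ne_zero.mpr hi)
    have hdle : ∀ x ∈ X, x ≠ xh → d ≤ ∑ i, |x i - xh i| := by
      intro x hx hxe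
      exact Finset.inf'_le _ (Finset.mem_filter.mpr ⟨hx, hxe⟩)
    set ρ := (Q xh - X.inf' hX Q) / d with hρdef
    have h2 := part2 d hd hdle ρ le_rfl
    refine le_ciSup_of_le hbdd ((fun _ => -ρ), (fun _ => -ρ)) ?_
    have hpt : (fun x => Q x - (∑ i, (-ρ) * max (x i - xh i) 0)
        - ∑ i, (-ρ) * max (xh i - x i) 0)
        = fun x => Q x + ρ * ∑ i, |x i - xh i| := by
      funext x
      rw [← key x]
      simp only [neg_mul, Finset.sum_neg_distrib, ← Finset.mul_sum]
      ring
    simp only [hpt]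
    rw [h2]
end

section
/- Let $\hat{x} \in \mathbb{R}^n$ with $0 \le \hat{x}_i \le B_i$ for each $i$, let $v \in \mathbb{R}$, and $\pi^+, \pi^- \in \mathbb{R}^n$. Define $S_1 = \{(x, \theta) \in \prod_i [0, B_i] \times \mathbb{R} : \theta \ge v + \sum_i \pi^+_i (x_i - \hat{x}_i)^+ + \sum_i \pi^-_i (\hat{x}_i - x_i)^+,\ \exists z \in \{0,1\}^n \text{ s.t. } (x_i - \hat{x}_i)^+ \le (B_i - \hat{x}_i) z_i \text{ and } (\hat{x}_i - x_i)^+ \le \hat{x}_i(1 - z_i)\ \forall i\}$, and let $S_2$ be the same set with $z \in [0,1]^n$ and auxiliary variables $\omega^+_i - \omega^-_i = x_i - \hat{x}_i$, $0 \le \omega^+_i \le (B_i - \hat{x}_i) z_i$, $0 \le \omega^-_i \le \hat{x}_i (1 - z_i)$, and cut $\theta \ge v + \sum_i \pi^+_i \omega^+_i + \sum_i \pi^-_i \omega^-_i$. Then the convex hull of $S_1$ equals $S_2$. -/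
/-!
Both sets are images, under the affine map `(ω⁺, ω⁻, z, c) ↦ (x̂ + ω⁺ - ω⁻, c + π⁺ ⬝ ω⁺ + π⁻ ⬝ ω⁻)`,
of a product of per-coordinate sets in the variables `(ω⁺ᵢ, ω⁻ᵢ, zᵢ)` with the half-line `c ≥ v`:
the binary points for `S₁` (there `ω⁺ᵢ, ω⁻ᵢ` are forced to be the positive and negative parts of
`xᵢ - x̂ᵢ`) and the relaxed polytope for `S₂`. A relaxed point with `0 < z < 1` is the combination
`(1 - z) • (0, ω⁻ / (1 - z), 0) + z • (ω⁺ / z, 0, 1)` of two binary points, so each polytope is the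
convex hull of its binary points; convex hulls commute with products and affine images.
-/

open Set

/-- One coordinate of the extended formulation, with `w = (ω⁺, ω⁻, z)`. -/
def reluSplit (b xh : ℝ) : Set (ℝ × ℝ × ℝ) :=
  {w | w.2.2 ∈ Icc 0 1 ∧ 0 ≤ w.1 ∧ w.1 ≤ (b - xh) * w.2.2 ∧ 0 ≤ w.2.1 ∧ w.2.1 ≤ xh * (1 - w.2.2)}

def reluSplitBinary (b xh : ℝ) : Set (ℝ × ℝ × ℝ) :=
  {w ∈ reluSplit b xh | w.2.2 = 0 ∨ w.2.2 = 1}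

section reluSplit

variable {b xh : ℝ}

theorem convex_reluSplit : Convex ℝ (reluSplit b xh) := by
  rintro ⟨p, m, z⟩ ⟨⟨hz0, hz1⟩, hp0, hp, hm0, hm⟩ ⟨p', m', z'⟩ ⟨⟨hz0', hz1'⟩, hp0', hp', hm0', hm'⟩
    s t hs ht hst
  dsimp only at *
  refine ⟨⟨?_, ?_⟩, ?_, ?_, ?_, ?_⟩ <;> simp only [Prod.smul_fst, Prod.smul_snd, Prod.fst_add,
    Prod.snd_add, smul_eq_mul]
  · positivity
  · nlinarith
  · positivity
  · nlinarith [mul_le_mul_of_nonneg_left hp hs, mul_le_mul_of_nonneg_left hp' ht]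
  · positivity
  · nlinarith [mul_le_mul_of_nonneg_left hm hs, mul_le_mul_of_nonneg_left hm' ht,
      congrArg (xh * ·) hst]

theorem reluSplit_subset_convexHull_binary :
    reluSplit b xh ⊆ convexHull ℝ (reluSplitBinary b xh) := by
  rintro ⟨p, m, z⟩ hw
  obtain ⟨⟨hz0, hz1⟩, hp0, hp, hm0, hm⟩ := id hw
  dsimp only at *
  rcases hz0.eq_or_lt with rfl | hz0
  · exact subset_convexHull ℝ _ ⟨hw, Or.inl rfl⟩
  rcases hz1.eq_or_lt with rfl | hz1
  · exact subset_convexHull ℝ _ ⟨hw, Or.inr rfl⟩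
  have h1z : 0 < 1 - z := sub_pos.2 hz1
  have hlow : (0, m / (1 - z), 0) ∈ reluSplitBinary b xh :=
    ⟨⟨⟨le_rfl, zero_le_one⟩, le_rfl, by simp, div_nonneg hm0 h1z.le,
      by simpa using (div_le_iff₀ h1z).2 (by linarith)⟩, Or.inl rfl⟩
  have hhigh : (p / z, 0, 1) ∈ reluSplitBinary b xh :=
    ⟨⟨⟨zero_le_one, le_rfl⟩, div_nonneg hp0 hz0.le,
      by simpa using (div_le_iff₀ hz0).2 (by linarith), le_rfl, by simp⟩, Or.inr rfl⟩
  have hcomb : (1 - z) • (0, m / (1 - z), 0) + z • (p / z, 0, 1) = (p, m, z) := by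
    simp only [Prod.smul_mk, Prod.mk_add_mk, smul_eq_mul]
    field_simp
    simp
  rw [← hcomb]
  exact convex_convexHull ℝ _ (subset_convexHull ℝ _ hlow) (subset_convexHull ℝ _ hhigh)
    h1z.le hz0.le (sub_add_cancel 1 z)

theorem convexHull_reluSplitBinary :
    convexHull ℝ (reluSplitBinary b xh) = reluSplit b xh :=
  (convexHull_min (sep_subset _ _) convex_reluSplit).antisymm reluSplit_subset_convexHull_binary

theorem add_sub_mem_Icc_of_mem_reluSplit (h0 : 0 ≤ xh) (hb : xh ≤ b)
    {w : ℝ × ℝ × ℝ} (hw : w ∈ reluSplit b xh) : xh + (w.1 - w.2.1) ∈ Icc 0 b := by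
  obtain ⟨⟨hz0, hz1⟩, hp0, hp, hm0, hm⟩ := hw
  constructor <;> nlinarith

theorem max_sub_zero_eq_of_mem_reluSplitBinary {w : ℝ × ℝ × ℝ}
    (hw : w ∈ reluSplitBinary b xh) : max (w.1 - w.2.1) 0 = w.1 ∧ max (w.2.1 - w.1) 0 = w.2.1 := by
  obtain ⟨⟨-, hp0, hp, hm0, hm⟩, hz | hz⟩ := hw <;> rw [hz] at hp hm
  · have hp : w.1 = 0 := by linarith
    simp [hp, hm0]
  · have hm : w.2.1 = 0 := by linarith
    simp [hm, hp0]

end reluSplit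

section reluCut

variable {n : ℕ}

def reluCutSet (B xh : Fin n → ℝ) (v : ℝ) (pip pim : Fin n → ℝ) : Set ((Fin n → ℝ) × ℝ) :=
  {q | (∀ i, q.1 i ∈ Set.Icc 0 (B i)) ∧
    (v + (∑ i, pip i * max (q.1 i - xh i) 0) + (∑ i, pim i * max (xh i - q.1 i) 0) ≤ q.2) ∧
    ∃ z : Fin n → ℝ, (∀ i, z i = 0 ∨ z i = 1) ∧
      ∀ i, max (q.1 i - xh i) 0 ≤ (B i - xh i) * z i ∧
        max (xh i - q.1 i) 0 ≤ xh i * (1 - z i)}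

def reluCutRelaxation (B xh : Fin n → ℝ) (v : ℝ) (pip pim : Fin n → ℝ) :
    Set ((Fin n → ℝ) × ℝ) :=
  {q | (∀ i, q.1 i ∈ Set.Icc 0 (B i)) ∧
    ∃ ωp ωm z : Fin n → ℝ, (∀ i, z i ∈ Set.Icc (0 : ℝ) 1) ∧
      (∀ i, ωp i - ωm i = q.1 i - xh i ∧ 0 ≤ ωp i ∧ ωp i ≤ (B i - xh i) * z i ∧
        0 ≤ ωm i ∧ ωm i ≤ xh i * (1 - z i)) ∧
      v + (∑ i, pip i * ωp i) + (∑ i, pim i * ωm i) ≤ q.2}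

def reluCutLinearMap (pip pim : Fin n → ℝ) :
    (Fin n → ℝ × ℝ × ℝ) × ℝ →ₗ[ℝ] (Fin n → ℝ) × ℝ where
  toFun q := (fun i => (q.1 i).1 - (q.1 i).2.1,
    q.2 + (∑ i, pip i * (q.1 i).1) + ∑ i, pim i * (q.1 i).2.1)
  map_add' q q' := by
    ext
    · simp only [Prod.fst_add, Pi.add_apply, Prod.snd_add]; ring
    · simp only [Prod.fst_add, Prod.snd_add, Pi.add_apply, mul_add, Finset.sum_add_distrib]; ring
  map_smul' a q := by
    ext
    · simp only [Prod.smul_fst, Prod.smul_snd, Pi.smul_apply, smul_eq_mul, RingHom.id_apply]; ring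
    · simp only [Prod.smul_fst, Prod.smul_snd, Pi.smul_apply, smul_eq_mul, RingHom.id_apply,
        mul_add, Finset.mul_sum, mul_left_comm a]

def reluCutMap (xh pip pim : Fin n → ℝ) : (Fin n → ℝ × ℝ × ℝ) × ℝ →ᵃ[ℝ] (Fin n → ℝ) × ℝ :=
  (reluCutLinearMap pip pim).toAffineMap + AffineMap.const ℝ _ (xh, 0)

@[simp]
theorem reluCutMap_apply (xh pip pim : Fin n → ℝ) (q : (Fin n → ℝ × ℝ × ℝ) × ℝ) :
    reluCutMap xh pip pim q = (fun i => xh i + ((q.1 i).1 - (q.1 i).2.1),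
      q.2 + (∑ i, pip i * (q.1 i).1) + ∑ i, pim i * (q.1 i).2.1) := by
  ext i <;> simp [reluCutMap, reluCutLinearMap]
  ring

variable {B xh : Fin n → ℝ} {v : ℝ} {pip pim : Fin n → ℝ}

theorem reluCutSet_eq_image (hxh : ∀ i, 0 ≤ xh i ∧ xh i ≤ B i) :
    reluCutSet B xh v pip pim =
      reluCutMap xh pip pim '' ((univ.pi fun i => reluSplitBinary (B i) (xh i)) ×ˢ Ici v) := by
  ext ⟨x, θ⟩
  constructor
  · rintro ⟨-, hcut, z, hz, hzx⟩
    refine ⟨(fun i => (max (x i - xh i) 0, max (xh i - x i) 0, z i),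
      θ - (∑ i, pip i * max (x i - xh i) 0) - ∑ i, pim i * max (xh i - x i) 0),
      ⟨fun i _ => ⟨⟨?_, le_max_right _ _, (hzx i).1, le_max_right _ _, (hzx i).2⟩, hz i⟩, ?_⟩, ?_⟩
    · rcases hz i with h | h <;> simp [h]
    · simp only [mem_Ici]; linarith
    · simp only [reluCutMap_apply, Prod.mk.injEq]
      refine ⟨funext fun i => ?_, by ring⟩
      rw [← neg_sub (x i), max_zero_sub_max_neg_zero_eq_self, add_sub_cancel]
  · rintro ⟨⟨w, c⟩, ⟨hw, hc⟩, hq⟩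
    rw [mem_univ_pi] at hw
    simp only [reluCutMap_apply, Prod.mk.injEq] at hq
    obtain ⟨rfl, rfl⟩ := hq
    have hmax i := max_sub_zero_eq_of_mem_reluSplitBinary (hw i)
    simp only [reluCutSet, mem_ofPred_eq, add_sub_cancel_left, sub_add_cancel_left, neg_sub, hmax]
    exact ⟨fun i => add_sub_mem_Icc_of_mem_reluSplit (hxh i).1 (hxh i).2 (hw i).1,
      by linarith [mem_Ici.1 hc], fun i => (w i).2.2, fun i => (hw i).2,
      fun i => ⟨(hw i).1.2.2.1, (hw i).1.2.2.2.2⟩⟩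

theorem reluCutRelaxation_eq_image (hxh : ∀ i, 0 ≤ xh i ∧ xh i ≤ B i) :
    reluCutRelaxation B xh v pip pim =
      reluCutMap xh pip pim '' ((univ.pi fun i => reluSplit (B i) (xh i)) ×ˢ Ici v) := by
  ext ⟨x, θ⟩
  constructor
  · rintro ⟨-, ωp, ωm, z, hz, hω, hcut⟩
    refine ⟨(fun i => (ωp i, ωm i, z i), θ - (∑ i, pip i * ωp i) - ∑ i, pim i * ωm i),
      ⟨fun i _ => ⟨hz i, (hω i).2⟩, ?_⟩, ?_⟩
    · simp only [mem_Ici]; linarith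
    · simp only [reluCutMap_apply, Prod.mk.injEq]
      refine ⟨funext fun i => ?_, by ring⟩
      rw [(hω i).1, add_sub_cancel]
  · rintro ⟨⟨w, c⟩, ⟨hw, hc⟩, hq⟩
    rw [mem_univ_pi] at hw
    simp only [reluCutMap_apply, Prod.mk.injEq] at hq
    obtain ⟨rfl, rfl⟩ := hq
    refine ⟨fun i => add_sub_mem_Icc_of_mem_reluSplit (hxh i).1 (hxh i).2 (hw i),
      fun i => (w i).1, fun i => (w i).2.1, fun i => (w i).2.2, fun i => (hw i).1,
      fun i => ⟨by ring, (hw i).2⟩, by linarith [mem_Ici.1 hc]⟩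

end reluCut

/-- the convex hull of the mixed-integer linearization of a ReLU
Lagrangian cut equals its continuous relaxation. -/
theorem relu_cut_linearization_convex_hull (n : ℕ) (B xh : Fin n → ℝ)
    (hxh : ∀ i, 0 ≤ xh i ∧ xh i ≤ B i) (v : ℝ) (pip pim : Fin n → ℝ)
    (S₁ S₂ : Set ((Fin n → ℝ) × ℝ))
    (hS₁ : S₁ = {q | (∀ i, q.1 i ∈ Set.Icc 0 (B i)) ∧
      (v + (∑ i, pip i * max (q.1 i - xh i) 0) + (∑ i, pim i * max (xh i - q.1 i) 0) ≤ q.2) ∧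
      ∃ z : Fin n → ℝ, (∀ i, z i = 0 ∨ z i = 1) ∧
        ∀ i, max (q.1 i - xh i) 0 ≤ (B i - xh i) * z i ∧
          max (xh i - q.1 i) 0 ≤ xh i * (1 - z i)})
    (hS₂ : S₂ = {q | (∀ i, q.1 i ∈ Set.Icc 0 (B i)) ∧
      ∃ ωp ωm z : Fin n → ℝ, (∀ i, z i ∈ Set.Icc (0 : ℝ) 1) ∧
        (∀ i, ωp i - ωm i = q.1 i - xh i ∧ 0 ≤ ωp i ∧ ωp i ≤ (B i - xh i) * z i ∧
          0 ≤ ωm i ∧ ωm i ≤ xh i * (1 - z i)) ∧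
        v + (∑ i, pip i * ωp i) + (∑ i, pim i * ωm i) ≤ q.2}) :
    convexHull ℝ S₁ = S₂ := by
  subst hS₁ hS₂
  change convexHull ℝ (reluCutSet B xh v pip pim) = reluCutRelaxation B xh v pip pim
  rw [reluCutSet_eq_image hxh, reluCutRelaxation_eq_image hxh, ← AffineMap.image_convexHull,
    convexHull_prod, convexHull_pi, (convex_Ici v).convexHull_eq]
  simp only [convexHull_reluSplitBinary]
end
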